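/- arXiv:2108.06308 — 5 statements merged into one kernel-verified Lean document; each statement's English description precedes it below -/
import Mathlib

section
/- Let (X,Z^k,T) be a Z^k-action on a compact metric space, 1 ≤ h ≤ k, and V an h-dimensional linear subspace of R^k. For r > √k/2 write mdim(X,T,V;r) = lim_{ε→0} liminf_{N→∞} Widim_ε(X, d^T_{B_r(V)∩[-N,N]^k}) / vol_h(V ∩ [-N,N]^k). Then for any r_1, r_2 > √k/2 one has mdim(X,T,V;r_1) = mdim(X,T,V;r_2); that is, the directional mean dimension is independent of the choice of r > √k/2. -/
open Set Filter Metric MeasureTheory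
open scoped ENNReal NNReal

noncomputable section

/-- `𝒰` is a finite open cover of `X`. -/
def IsFinOpenCover (X : Type) [TopologicalSpace X] (𝒰 : Set (Set X)) : Prop :=
  𝒰.Finite ∧ (∀ U ∈ 𝒰, IsOpen U) ∧ ⋃₀ 𝒰 = Set.univ

/-- `𝒰` is a finite closed cover of `X`. -/
def IsFinClosedCover (X : Type) [TopologicalSpace X] (𝒰 : Set (Set X)) : Prop :=
  𝒰.Finite ∧ (∀ U ∈ 𝒰, IsClosed U) ∧ ⋃₀ 𝒰 = Set.univ

/-- The order of a cover: `max_x (#{U ∈ 𝒰 | x ∈ U} - 1)`. -/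
def ordCover (X : Type) (𝒰 : Set (Set X)) : ℕ :=
  ⨆ x : X, ({U | U ∈ 𝒰 ∧ x ∈ U}.ncard - 1)

/-- The degree `D(𝒰)`: minimal order of a finite open cover refining `𝒰`. -/
def degCover (X : Type) [TopologicalSpace X] (𝒰 : Set (Set X)) : ℕ :=
  sInf {m : ℕ | ∃ 𝒱 : Set (Set X),
    IsFinOpenCover X 𝒱 ∧ (∀ V ∈ 𝒱, ∃ U ∈ 𝒰, V ⊆ U) ∧ ordCover X 𝒱 = m}

/-- Lebesgue covering dimension. -/
def covDim (K : Type) [TopologicalSpace K] : ℕ∞ :=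
  ⨆ (𝒰 : Set (Set K)) (_ : IsFinOpenCover K 𝒰), (degCover K 𝒰 : ℕ∞)

/-- `Widim_ε(X, ρ)`: minimal covering dimension of a compact metric space `K`
admitting a continuous `ε`-embedding (w.r.t. the distance function `ρ`) from `X`. -/
def widim (X : Type) [TopologicalSpace X] (ρ : X → X → ℝ) (ε : ℝ) : ℕ∞ :=
  sInf {m : ℕ∞ | ∃ (K : Type) (_ : MetricSpace K) (_ : CompactSpace K) (f : X → K),
    Continuous f ∧ (∀ x y, f x = f y → ρ x y < ε) ∧ covDim K = m}

/-- The dynamical distance `ρ^T_Ω(x,y) = sup_{n ∈ Ω} ρ(T^n x, T^n y)`. -/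
def dynDist {X : Type} {k : ℕ} (ρ : X → X → ℝ) (T : (Fin k → ℤ) → X → X)
    (Ω : Set (Fin k → ℤ)) (x y : X) : ℝ :=
  ⨆ n ∈ Ω, ρ (T n x) (T n y)

/-- The cube `[-N,N]^k ⊆ ℤ^k`. -/
def cubeZ (k N : ℕ) : Set (Fin k → ℤ) := {n | ∀ i, |n i| ≤ (N : ℤ)}

/-- The boundary `∂[-N,N]^k ⊆ ℤ^k`. -/
def cubeBoundary (k N : ℕ) : Set (Fin k → ℤ) :=
  {n | (∀ i, |n i| ≤ (N : ℤ)) ∧ ∃ j, n j = (N : ℤ) ∨ n j = -(N : ℤ)}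

/-- The natural embedding `ℤ^k → ℝ^k`. -/
def embZR {k : ℕ} (u : Fin k → ℤ) : EuclideanSpace ℝ (Fin k) := WithLp.toLp 2 (fun i => (u i : ℝ))

/-- `B_r(V) = {u ∈ ℤ^k : |u - w| < r for some w ∈ V}`. -/
def ballZ (k : ℕ) (V : Set (EuclideanSpace ℝ (Fin k))) (r : ℝ) : Set (Fin k → ℤ) :=
  {u | ∃ w ∈ V, dist (embZR u) w < r}

/-- `vol_h(V ∩ [-N,N]^k)`, the `h`-dimensional Hausdorff measure of the
intersection of `V` with the real cube `[-N,N]^k`. -/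
def volCap (k h : ℕ) (V : Submodule ℝ (EuclideanSpace ℝ (Fin k))) (N : ℕ) : ℝ≥0∞ :=
  μH[(h : ℝ)] ((V : Set (EuclideanSpace ℝ (Fin k))) ∩ {x | ∀ i, |x i| ≤ (N : ℝ)})

/-- The `h`-dimensional directional mean dimension of the `ℤ^k`-action `T` with respect to
the subspace `V`, computed with the parameter `r` and the distance function `ρ`:
`mdim(X,T,V;r) = lim_{ε→0} liminf_{N→∞} Widim_ε(X, ρ^T_{B_r(V) ∩ [-N,N]^k}) / vol_h(V ∩ [-N,N]^k)`
(the limit as `ε → 0` of a quantity nonincreasing in `ε` is its supremum over `ε > 0`). -/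
def dirMdim (k : ℕ) (X : Type) [TopologicalSpace X] (ρ : X → X → ℝ)
    (T : (Fin k → ℤ) → X → X) (V : Submodule ℝ (EuclideanSpace ℝ (Fin k)))
    (r : ℝ) (h : ℕ) : ℝ≥0∞ :=
  ⨆ (ε : ℝ) (_ : 0 < ε),
    Filter.liminf (fun N : ℕ =>
      (widim X (dynDist ρ T (ballZ k (V : Set (EuclideanSpace ℝ (Fin k))) r ∩ cubeZ k N)) ε
        : ℝ≥0∞) / volCap k h V N) Filter.atTop

/-- `T` is a continuous action of `ℤ^k` on `X`. -/
structure IsZkAction (k : ℕ) (X : Type) [TopologicalSpace X]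
    (T : (Fin k → ℤ) → X → X) : Prop where
  cont : ∀ n, Continuous (T n)
  zero : T 0 = id
  add : ∀ m n, T (m + n) = T m ∘ T n

/-- The join `⋁_{n ∈ Ω} T^n 𝒰`; here `T^n(U) = (T^{-n})⁻¹(U)` since `T^n` is a
bijection with inverse `T^{-n}`. -/
def joinCover {X : Type} {k : ℕ} (T : (Fin k → ℤ) → X → X) (Ω : Set (Fin k → ℤ))
    (𝒰 : Set (Set X)) : Set (Set X) :=
  {W | ∃ g : (Fin k → ℤ) → Set X, (∀ n ∈ Ω, g n ∈ 𝒰) ∧ W = ⋂ n ∈ Ω, T (-n) ⁻¹' g n}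

/-- The mean dimension of a `ℤ^m`-action:
`mdim(X,ℤ^m,S) = sup_𝒰 lim_{N→∞} D(⋁_{n∈[-N,N]^m} S^n 𝒰)/(2N+1)^m`. -/
def mdimAct (m : ℕ) (X : Type) [TopologicalSpace X] (S : (Fin m → ℤ) → X → X) : ℝ≥0∞ :=
  ⨆ (𝒰 : Set (Set X)) (_ : IsFinOpenCover X 𝒰),
    Filter.liminf (fun N : ℕ =>
      (degCover X (joinCover S (cubeZ m N) 𝒰) : ℝ≥0∞) / (2 * N + 1 : ℝ≥0∞) ^ m)
      Filter.atTop

/-- Diameter of a set with respect to a distance function `ρ`. -/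
def diamBy {X : Type} (ρ : X → X → ℝ) (s : Set X) : ℝ := ⨆ x ∈ s, ⨆ y ∈ s, ρ x y

/-- Mesh of a cover with respect to a distance function `ρ`. -/
def meshBy {X : Type} (ρ : X → X → ℝ) (𝒲 : Set (Set X)) : ℝ := ⨆ W ∈ 𝒲, diamBy ρ W


/-! Let `L = ⌈2r₂ + 1⌉`. Every `u ∈ B_{r₂}(V) ∩ [-N,N]^k` is `a + v` with `a ∈ [-L,L]^k` and
`v ∈ B_{r₁}(V) ∩ [-N,N]^k`: shrink a point of `V` near `u` towards `0` until its coordinates are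
at most `N - 1/2`, then round it, which moves it by at most `√k/2 < r₁`. The finitely many maps
`T^a`, `a ∈ [-L,L]^k`, are uniformly equicontinuous, so some `δ` independent of `N` makes
`d^T_{B_{r₁}(V) ∩ [-N,N]^k} < δ` imply `d^T_{B_{r₂}(V) ∩ [-N,N]^k} < ε`. Hence `Widim_ε` for `r₂`
is at most `Widim_δ` for `r₁`, and the two mean dimensions agree by symmetry. -/

open Pointwise

lemma EuclideanSpace.dist_le_sqrt_card_mul {ι : Type*} [Fintype ι]
    {x y : EuclideanSpace ℝ ι} {c : ℝ} (hc : 0 ≤ c) (h : ∀ i, dist (x i : ℝ) (y i) ≤ c) :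
    dist x y ≤ √(Fintype.card ι) * c := by
  rw [EuclideanSpace.dist_eq, ← Real.sqrt_sq hc, ← Real.sqrt_mul (Nat.cast_nonneg _)]
  gcongr
  calc ∑ i, dist (x i : ℝ) (y i) ^ 2 ≤ ∑ _i : ι, c ^ 2 := by
        gcongr with i
        exact h i
    _ = _ := by simp

lemma dist_embZR_round_le {k : ℕ} (x : EuclideanSpace ℝ (Fin k)) :
    dist (embZR fun i => round (x i)) x ≤ √k / 2 := by
  have := EuclideanSpace.dist_le_sqrt_card_mul (x := embZR fun i => round (x i)) (y := x)
    (by norm_num : (0 : ℝ) ≤ 1 / 2) fun i => by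
      rw [Real.dist_eq, abs_sub_comm]
      exact abs_sub_round (x i)
  rwa [Fintype.card_fin, ← div_eq_mul_one_div] at this

lemma cubeZ_finite (k N : ℕ) : (cubeZ k N).Finite :=
  (Set.Finite.pi' fun _ => Set.finite_Icc (-(N : ℤ)) N).subset fun _ hn i => abs_le.mp (hn i)

lemma ballZ_inter_cubeZ_subset_add {k N : ℕ} (V : Submodule ℝ (EuclideanSpace ℝ (Fin k)))
    {r₁ r₂ : ℝ} (hr₁ : √k / 2 < r₁) (hN : 1 ≤ N) :
    ballZ k V r₂ ∩ cubeZ k N ⊆ cubeZ k ⌈2 * r₂ + 1⌉₊ + ballZ k V r₁ ∩ cubeZ k N := by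
  rintro u ⟨⟨w, hwV, huw⟩, hu⟩
  have hr₂ : 0 < r₂ := dist_nonneg.trans_lt huw
  have hN' : (1 : ℝ) ≤ N := by exact_mod_cast hN
  have huw_i (i : Fin k) : |(u i : ℝ) - w i| < r₂ := (PiLp.dist_apply_le _ _ i).trans_lt huw
  have hu_i (i : Fin k) : |(u i : ℝ)| ≤ N := by exact_mod_cast hu i
  have hw_i (i : Fin k) : |w i| ≤ N + r₂ := by
    linarith [abs_sub_abs_le_abs_sub (w i) (u i), abs_sub_comm (u i : ℝ) (w i), huw_i i, hu_i i]
  -- the shrinking factor `s` maps `[-(N + r₂), N + r₂]` onto `[-(N - 1/2), N - 1/2]`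
  set s : ℝ := (N - 1 / 2) / (N + r₂)
  have hs : s * (N + r₂) = N - 1 / 2 := div_mul_cancel₀ _ (by positivity)
  have hs0 : 0 ≤ s := div_nonneg (by linarith) (by positivity)
  have hs1 : s ≤ 1 := (div_le_one (by positivity)).2 (by linarith)
  have hsw_i (i : Fin k) : |s * w i| ≤ N - 1 / 2 := by
    rw [abs_mul, abs_of_nonneg hs0, ← hs]
    exact mul_le_mul_of_nonneg_left (hw_i i) hs0
  have hwsw_i (i : Fin k) : |w i - s * w i| ≤ r₂ + 1 / 2 := by
    rw [← one_sub_mul, abs_mul, abs_of_nonneg (by linarith)]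
    nlinarith [hw_i i]
  set v : Fin k → ℤ := fun i => round ((s • w) i)
  have hv_i (i : Fin k) : |(v i : ℝ) - s * w i| ≤ 1 / 2 := by
    rw [abs_sub_comm]
    exact abs_sub_round _
  refine ⟨u - v, fun i => ?_, v, ⟨⟨s • w, V.smul_mem s hwV, (dist_embZR_round_le _).trans_lt hr₁⟩,
    fun i => ?_⟩, sub_add_cancel u v⟩
  · have : |((u i - v i : ℤ) : ℝ)| ≤ 2 * r₂ + 1 := by
      push_cast
      calc |(u i : ℝ) - v i| = |((u i : ℝ) - w i) + (w i - s * w i) + (s * w i - v i)| := by ring_nf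
        _ ≤ |(u i : ℝ) - w i| + |w i - s * w i| + |s * w i - v i| := abs_add_three _ _ _
        _ ≤ 2 * r₂ + 1 := by linarith [huw_i i, hwsw_i i, abs_sub_comm (s * w i) (v i), hv_i i]
    exact_mod_cast this.trans (Nat.le_ceil _)
  · have : |(v i : ℝ)| ≤ N := by
      linarith [abs_sub_abs_le_abs_sub (v i : ℝ) (s * w i), hv_i i, hsw_i i]
    exact_mod_cast this

section Dynamics

variable {X : Type} [MetricSpace X] {k : ℕ} (T : (Fin k → ℤ) → X → X)

lemma dynDist_le {Ω : Set (Fin k → ℤ)} {x y : X} {c : ℝ} (hc : 0 ≤ c)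
    (h : ∀ n ∈ Ω, dist (T n x) (T n y) ≤ c) : dynDist dist T Ω x y ≤ c :=
  Real.iSup_le (fun n => Real.iSup_le (h n) hc) hc

lemma dist_le_dynDist [BoundedSpace X] {Ω : Set (Fin k → ℤ)} {x y : X} {n : Fin k → ℤ}
    (hn : n ∈ Ω) : dist (T n x) (T n y) ≤ dynDist dist T Ω x y := by
  have hbdd : BddAbove (Set.range fun m => ⨆ _ : m ∈ Ω, dist (T m x) (T m y)) :=
    ⟨diam (univ : Set X), by
      rintro _ ⟨m, rfl⟩
      exact Real.iSup_le
        (fun _ => dist_le_diam_of_mem (Bornology.IsBounded.all univ) trivial trivial) diam_nonneg⟩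
  exact le_ciSup_of_le hbdd n (ciSup_pos (f := fun _ => dist (T n x) (T n y)) hn).ge

lemma widim_le_of_lt_imp_lt {X : Type} [TopologicalSpace X] {ρ₁ ρ₂ : X → X → ℝ} {δ ε : ℝ}
    (h : ∀ x y, ρ₁ x y < δ → ρ₂ x y < ε) : widim X ρ₂ ε ≤ widim X ρ₁ δ := by
  apply sInf_le_sInf
  rintro m ⟨K, hK, hKc, f, hf, hfδ, rfl⟩
  exact ⟨K, hK, hKc, f, hf, fun x y hxy => h x y (hfδ x y hxy), rfl⟩

variable {T} [CompactSpace X]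

lemma IsZkAction.exists_widim_dynDist_le (hT : IsZkAction k X T) {A : Set (Fin k → ℤ)}
    (hA : A.Finite) {ε : ℝ} (hε : 0 < ε) :
    ∃ δ > 0, ∀ Ω₁ Ω₂ : Set (Fin k → ℤ), Ω₂ ⊆ A + Ω₁ →
      widim X (dynDist dist T Ω₂) ε ≤ widim X (dynDist dist T Ω₁) δ := by
  have : Finite A := hA.to_subtype
  have hequi : UniformEquicontinuous fun a : A => T a := uniformEquicontinuous_finite.2
    fun a => CompactSpace.uniformContinuous_of_continuous (hT.cont a)
  obtain ⟨δ, hδ, hTδ⟩ := Metric.uniformEquicontinuous_iff.1 hequi (ε / 2) (half_pos hε)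
  refine ⟨δ, hδ, fun Ω₁ Ω₂ hΩ => widim_le_of_lt_imp_lt fun x y hxy => ?_⟩
  refine (dynDist_le T (half_pos hε).le fun n hn => ?_).trans_lt (half_lt_self hε)
  obtain ⟨a, ha, v, hv, rfl⟩ := hΩ hn
  rw [hT.add]
  exact (hTδ _ _ ((dist_le_dynDist T hv).trans_lt hxy) ⟨a, ha⟩).le

lemma IsZkAction.dirMdim_le_dirMdim (hT : IsZkAction k X T)
    (V : Submodule ℝ (EuclideanSpace ℝ (Fin k))) (h : ℕ) {r₁ : ℝ} (r₂ : ℝ)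
    (hr₁ : √k / 2 < r₁) : dirMdim k X dist T V r₂ h ≤ dirMdim k X dist T V r₁ h := by
  refine iSup₂_le fun ε hε => ?_
  obtain ⟨δ, hδ, hwidim⟩ := hT.exists_widim_dynDist_le (cubeZ_finite k ⌈2 * r₂ + 1⌉₊) hε
  refine le_iSup₂_of_le δ hδ (liminf_le_liminf ?_)
  filter_upwards [eventually_ge_atTop 1] with N hN
  gcongr
  exact hwidim _ _ (ballZ_inter_cubeZ_subset_add V hr₁ hN)

end Dynamics

theorem dirMdim_indep_radius_general
    (k : ℕ) (X : Type) [MetricSpace X] [CompactSpace X]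
    (T : (Fin k → ℤ) → X → X) (hT : IsZkAction k X T)
    (h : ℕ)
    (V : Submodule ℝ (EuclideanSpace ℝ (Fin k)))
    (r₁ r₂ : ℝ) (hr₁ : Real.sqrt k / 2 < r₁) (hr₂ : Real.sqrt k / 2 < r₂) :
    dirMdim k X dist T V r₁ h = dirMdim k X dist T V r₂ h :=
  le_antisymm (hT.dirMdim_le_dirMdim V h r₁ hr₂) (hT.dirMdim_le_dirMdim V h r₂ hr₁)

/-- The directional mean dimension is independent of the choice of the
parameter `r > √k/2`. -/
theorem dirMdim_indep_radius
    (k : ℕ) (X : Type) [MetricSpace X] [CompactSpace X]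
    (T : (Fin k → ℤ) → X → X) (hT : IsZkAction k X T)
    (h : ℕ) (hh1 : 1 ≤ h) (hhk : h ≤ k)
    (V : Submodule ℝ (EuclideanSpace ℝ (Fin k))) (hV : Module.finrank ℝ V = h)
    (r₁ r₂ : ℝ) (hr₁ : Real.sqrt k / 2 < r₁) (hr₂ : Real.sqrt k / 2 < r₂) :
    dirMdim k X dist T V r₁ h = dirMdim k X dist T V r₂ h :=
  dirMdim_indep_radius_general k X T hT h V r₁ r₂ hr₁ hr₂
end
end

section
/- Let (X,Z^k,T) be a continuum-wise expansive Z^k-action on a compact metric space (X,d) with expansivity constant 2c > 0. Then there exists δ > 0 such that for every connected compact subset A of X and every integer N ≥ 1: if c ≤ max{diam T^n(A) : n ∈ [-N,N]^k} ≤ 2c, then max{diam T^n(A) : n ∈ ∂[-N,N]^k} > δ. -/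
open Set Filter Metric MeasureTheory
open scoped ENNReal NNReal

/-!
Suppose not. Then there are continua `A i`, cubes `[-N i, N i]^k` and points `n i` of the cubes
such that `diam (T^(n i) A i) ≥ c`, every iterate over the cube has diameter at most `2c`, and
every iterate over the boundary has diameter at most `1/(i+1)`. Since a boundary point `b` with
`n i - b` in a fixed finite box would give `T^(n i) A i` a small diameter by uniform continuity,
`n i` drifts infinitely far from the boundary. A Hausdorff limit `K` of `T^(n i) A i` is then a
continuum with `diam K ≥ c` and `diam (T^m K) ≤ 2c` for every `m ∈ ℤ^k`, contradicting
continuum-wise expansivity.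
-/

open Topology

namespace Metric

variable {α β : Type*} [PseudoMetricSpace α] [PseudoMetricSpace β]

theorem diam_le_diam_add_two_mul_hausdorffDist {s t : Set α} (ht : Bornology.IsBounded t)
    (hst : hausdorffEDist s t ≠ ⊤) : diam s ≤ diam t + 2 * hausdorffDist s t := by
  have hsub : s ⊆ cthickening (hausdorffDist s t) t := fun x hx => by
    rw [mem_cthickening_iff, hausdorffDist, ENNReal.ofReal_toReal hst]
    exact infEDist_le_hausdorffEDist_of_mem hx
  exact (diam_mono hsub ht.cthickening).trans (diam_cthickening_le t hausdorffDist_nonneg)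

theorem _root_.UniformContinuous.eventually_diam_image_le {f : α → β} (hf : UniformContinuous f)
    {ε : ℝ} (hε : 0 < ε) :
    ∀ᶠ η in 𝓝 0, ∀ s : Set α, Bornology.IsBounded s → diam s ≤ η → diam (f '' s) ≤ ε := by
  obtain ⟨δ, hδ, hfδ⟩ := Metric.uniformContinuous_iff.1 hf ε hε
  filter_upwards [Iio_mem_nhds hδ] with η hη s hs hsη
  refine diam_le_of_forall_dist_le hε.le ?_
  rintro _ ⟨x, hx, rfl⟩ _ ⟨y, hy, rfl⟩
  exact (hfδ ((dist_le_diam_of_mem hs hx hy).trans_lt (hsη.trans_lt hη))).le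

end Metric

namespace TopologicalSpace.NonemptyCompacts

theorem lipschitzWith_diam {α : Type*} [MetricSpace α] :
    LipschitzWith 2 fun K : NonemptyCompacts α => diam (K : Set α) :=
  LipschitzWith.of_le_add_mul 2 fun K L =>
    diam_le_diam_add_two_mul_hausdorffDist L.isCompact.isBounded (edist_ne_top K L)

theorem isClosed_setOf_isPreconnected {α : Type*} [TopologicalSpace α] [T2Space α] :
    IsClosed {K : NonemptyCompacts α | IsPreconnected (K : Set α)} := by
  refine isOpen_compl_iff.1 (isOpen_iff_forall_mem_open.2 fun K hK => ?_)
  simp only [mem_compl_iff, mem_ofPred_eq,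
    isPreconnected_iff_subset_of_fully_disjoint_closed K.isCompact.isClosed, not_forall,
    not_or] at hK
  obtain ⟨u, v, hu, hv, hKuv, huv, hKu, hKv⟩ := hK
  obtain ⟨U, V, hU, hV, huU, hvV, hUV⟩ := SeparatedNhds.of_isCompact_isCompact
    (K.isCompact.inter_left hu) (K.isCompact.inter_left hv)
    (huv.mono inter_subset_left inter_subset_left)
  refine ⟨{L | ↑L ⊆ U ∪ V} ∩ {L | (↑L ∩ U).Nonempty} ∩ {L | (↑L ∩ V).Nonempty}, ?_,
    ((isOpen_subsets_of_isOpen (hU.union hV)).inter (isOpen_inter_nonempty_of_isOpen hU)).inter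
      (isOpen_inter_nonempty_of_isOpen hV), ?_⟩
  · rintro L ⟨⟨hLUV, hLU⟩, hLV⟩ hL
    obtain ⟨x, -, hxU, hxV⟩ := hL U V hU hV hLUV hLU hLV
    exact hUV.ne_of_mem hxU hxV rfl
  · obtain ⟨x, hxK, hxv⟩ := not_subset.1 hKv
    obtain ⟨y, hyK, hyu⟩ := not_subset.1 hKu
    refine ⟨⟨fun z hz => (hKuv hz).imp (fun h => huU ⟨h, hz⟩) (fun h => hvV ⟨h, hz⟩), ?_⟩, ?_⟩
    · exact ⟨x, hxK, huU ⟨(hKuv hxK).resolve_right hxv, hxK⟩⟩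
    · exact ⟨y, hyK, hvV ⟨(hKuv hyK).resolve_left hyu, hyK⟩⟩

end TopologicalSpace.NonemptyCompacts

theorem finite_cubeZ (k L : ℕ) : (cubeZ k L).Finite := by
  convert Set.Finite.pi (t := fun _ : Fin k => Icc (-(L : ℤ)) L) fun _ => finite_Icc _ _
  ext m
  simp only [cubeZ, mem_ofPred_eq, mem_univ_pi, mem_Icc, abs_le]

theorem exists_mem_cubeZ {k : ℕ} (m : Fin k → ℤ) : ∃ L, m ∈ cubeZ k L :=
  ⟨Finset.univ.sup fun j => (m j).natAbs, fun j => by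
    rw [Int.abs_eq_natAbs]
    exact_mod_cast Finset.le_sup (f := fun j => (m j).natAbs) (Finset.mem_univ j)⟩

/-- Move the coordinate in which `m + n` leaves the cube to the face it crosses. -/
theorem exists_mem_cubeBoundary_sub_mem_cubeZ {k N L : ℕ} {n m : Fin k → ℤ}
    (hn : n ∈ cubeZ k N) (hm : m ∈ cubeZ k L) (hmn : m + n ∉ cubeZ k N) :
    ∃ b ∈ cubeBoundary k N, n - b ∈ cubeZ k L := by
  simp only [cubeZ, mem_ofPred_eq, not_forall, not_le, Pi.add_apply] at hn hm hmn
  obtain ⟨j, hj⟩ := hmn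
  have hnj := abs_le.1 (hn j)
  have hmj := abs_le.1 (hm j)
  refine ⟨Function.update n j (if 0 < m j + n j then (N : ℤ) else -N), ⟨fun i => ?_, j, ?_⟩,
    fun i => ?_⟩
  · rcases eq_or_ne i j with rfl | hi
    · split_ifs <;> simp
    · simpa [hi] using hn i
  · split_ifs <;> simp
  · rcases eq_or_ne i j with rfl | hi
    · rw [lt_abs] at hj
      simp only [Pi.sub_apply, Function.update_self]
      rw [abs_le]
      split_ifs <;> omega
    · simp [hi]

namespace IsZkAction

variable {k : ℕ} {X : Type} [MetricSpace X] {T : (Fin k → ℤ) → X → X}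

theorem image_add (hT : IsZkAction k X T) (m n : Fin k → ℤ) (s : Set X) :
    T (m + n) '' s = T m '' (T n '' s) := by
  rw [hT.add, image_comp]

theorem eventually_add_mem_cubeZ [CompactSpace X] (hT : IsZkAction k X T) {c : ℝ} (hc : 0 < c)
    {ι : Type*} {l : Filter ι} {A : ι → Set X} {N : ι → ℕ} {n : ι → Fin k → ℤ} {η : ι → ℝ}
    (hη : Tendsto η l (𝓝 0)) (hn : ∀ i, n i ∈ cubeZ k (N i))
    (hlarge : ∀ i, c ≤ diam (T (n i) '' A i))
    (hbdry : ∀ i, ∀ b ∈ cubeBoundary k (N i), diam (T b '' A i) ≤ η i) (m : Fin k → ℤ) :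
    ∀ᶠ i in l, m + n i ∈ cubeZ k (N i) := by
  obtain ⟨L, hmL⟩ := exists_mem_cubeZ m
  have hsmall : ∀ᶠ i in l, ∀ m' ∈ cubeZ k L, ∀ s : Set X, Bornology.IsBounded s → diam s ≤ η i →
      diam (T m' '' s) ≤ c / 2 :=
    hη.eventually <| (finite_cubeZ k L).eventually_all.2 fun m' _ =>
      (CompactSpace.uniformContinuous_of_continuous (hT.cont m')).eventually_diam_image_le
        (half_pos hc)
  filter_upwards [hsmall] with i hi
  by_contra hout
  obtain ⟨b, hb, hnb⟩ := exists_mem_cubeBoundary_sub_mem_cubeZ (hn i) hmL hout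
  have hsplit : T (n i) '' A i = T (n i - b) '' (T b '' A i) := by
    rw [← hT.image_add, sub_add_cancel]
  have hsmall_n := hi _ hnb _ isBounded_of_compactSpace (hbdry i b hb)
  linarith [hsplit ▸ hlarge i]

end IsZkAction

open TopologicalSpace

/-- For a continuum-wise expansive `ℤ^k`-action with expansivity constant
`2c`, there is `δ > 0` such that any continuum whose maximal diameter over the cube
`[-N,N]^k` lies in `[c, 2c]` has some iterate over the boundary `∂[-N,N]^k` of diameter
greater than `δ`. -/
theorem cw_expansive_boundary_diam
    (k : ℕ) (X : Type) [MetricSpace X] [CompactSpace X]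
    (T : (Fin k → ℤ) → X → X) (hT : IsZkAction k X T) (c : ℝ) (hc : 0 < c)
    (hexp : ∀ A : Set X, IsCompact A → IsConnected A → A.Nontrivial →
      ∃ n : Fin k → ℤ, 2 * c < Metric.diam (T n '' A)) :
    ∃ δ > (0 : ℝ), ∀ A : Set X, IsCompact A → IsConnected A → ∀ N : ℕ, 1 ≤ N →
      (∃ n ∈ cubeZ k N, c ≤ Metric.diam (T n '' A)) →
      (∀ n ∈ cubeZ k N, Metric.diam (T n '' A) ≤ 2 * c) →
      ∃ n ∈ cubeBoundary k N, δ < Metric.diam (T n '' A) := by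
  by_contra! hcon
  choose A hA hAconn N _ hlarge hcube hbdry using
    fun i : ℕ => hcon (1 / (i + 1)) Nat.one_div_pos_of_nat
  choose n hn hnlarge using hlarge
  let B (i : ℕ) : NonemptyCompacts X :=
    NonemptyCompacts.map (T (n i)) (hT.cont _) ⟨⟨A i, hA i⟩, (hAconn i).nonempty⟩
  obtain ⟨K, φ, hφ, hlim⟩ := CompactSpace.tendsto_subseq B
  have hK_conn : IsPreconnected (K : Set X) :=
    NonemptyCompacts.isClosed_setOf_isPreconnected.mem_of_tendsto hlim <|
      .of_forall fun i => ((hAconn _).image _ (hT.cont _).continuousOn).isPreconnected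
  have hK_large : c ≤ diam (K : Set X) :=
    ge_of_tendsto (NonemptyCompacts.lipschitzWith_diam.continuous.tendsto K |>.comp hlim) <|
      .of_forall fun i => hnlarge _
  have hK_small (m : Fin k → ℤ) : diam (T m '' K) ≤ 2 * c := by
    refine le_of_tendsto ((NonemptyCompacts.lipschitzWith_diam.continuous.comp
      (hT.cont m).nonemptyCompacts_map).tendsto K |>.comp hlim) ?_
    filter_upwards [hφ.tendsto_atTop.eventually <| hT.eventually_add_mem_cubeZ hc
      tendsto_one_div_add_atTop_nhds_zero_nat hn hnlarge hbdry m] with i hi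
    simpa [B, ← hT.image_add] using hcube _ _ hi
  have hK_nontrivial : (K : Set X).Nontrivial := by
    by_contra h
    rw [not_nontrivial_iff] at h
    linarith [diam_subsingleton h]
  obtain ⟨m, hm⟩ := hexp K K.isCompact ⟨K.nonempty, hK_conn⟩ hK_nontrivial
  linarith [hK_small m]
end

section
/- Let X be a compact metric space, ρ a compatible metric on X, and c > 0. Let V be a finite closed cover of X such that every connected component of every member of V has ρ-diameter strictly less than 2c. Then there exists a finite closed cover W of X such that mesh(W,ρ) < 2c, ord(W) ≤ ord(V), and each member of W is contained in some member of V (i.e., W refines V). -/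
open Set Filter Metric MeasureTheory
open scoped ENNReal NNReal

/-!
Let `V ∈ 𝒱`. Every connected component `C` of the compact set `V` has diameter `< 2c`, hence so
does a small thickening of `C`; as `C` is the intersection of the clopen subsets of `V` containing
it, compactness puts one of them inside that thickening. Finitely many such clopen sets cover `V`,
and the cells of the Boolean algebra they generate partition `V` into finitely many disjoint
compact sets of diameter `< 2c`. Let `𝒲` be the union of these partitions over `V ∈ 𝒱`: a point
lies in at most one cell of each partition, so in no more members of `𝒲` than of `𝒱`.
-/

section ClopenPartition

variable {Y : Type*} [TopologicalSpace Y]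

lemma exists_isClopen_mem_subset_of_connectedComponent_subset [T2Space Y] [CompactSpace Y]
    {y : Y} {U : Set Y} (hU : IsOpen U) (h : connectedComponent y ⊆ U) :
    ∃ s, IsClopen s ∧ y ∈ s ∧ s ⊆ U := by
  let ι := {s : Set Y // IsClopen s ∧ y ∈ s}
  have : Nonempty ι := ⟨⟨univ, isClopen_univ, mem_univ y⟩⟩
  have hdir : Directed (· ⊇ ·) fun s : ι => (s : Set Y) := by
    rintro ⟨s, hs, hys⟩ ⟨t, ht, hyt⟩
    exact ⟨⟨s ∩ t, hs.inter ht, hys, hyt⟩, inter_subset_left, inter_subset_right⟩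
  rw [connectedComponent_eq_iInter_isClopen] at h
  obtain ⟨⟨s, hs, hys⟩, hsU⟩ := exists_subset_nhds_of_compactSpace hdir
    (fun s => s.2.1.isClosed) fun z hz => hU.mem_nhds (h hz)
  exact ⟨s, hs, hys, hsU⟩

lemma exists_finite_isClopen_partition_subordinate {ι : Type*} [Finite ι] {s : ι → Set Y}
    (hs : ∀ i, IsClopen (s i)) (hcover : ∀ y, ∃ i, y ∈ s i) :
    ∃ 𝒬 : Set (Set Y), 𝒬.Finite ∧ 𝒬.PairwiseDisjoint id ∧ ⋃₀ 𝒬 = univ ∧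
      ∀ Q ∈ 𝒬, IsClopen Q ∧ ∃ i, Q ⊆ s i := by
  let cell (y : Y) : Set Y := {z | ∀ i, z ∈ s i ↔ y ∈ s i}
  have hfin : (range cell).Finite :=
    (finite_range fun F : Set ι => {z | ∀ i, z ∈ s i ↔ i ∈ F}).subset
      (by rintro _ ⟨y, rfl⟩; exact ⟨{i | y ∈ s i}, rfl⟩)
  have hdisj : (range cell).PairwiseDisjoint id := by
    rintro _ ⟨y, rfl⟩ _ ⟨y', rfl⟩ hne
    refine Set.disjoint_left.2 fun z hz hz' => hne ?_
    exact Set.ext fun w => forall_congr' fun i => iff_congr Iff.rfl ((hz i).symm.trans (hz' i))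
  refine ⟨range cell, hfin, hdisj, eq_univ_of_forall fun y => ⟨cell y, ⟨y, rfl⟩, fun _ => Iff.rfl⟩,
    ?_⟩
  rintro _ ⟨y, rfl⟩
  have hclopen (i : ι) : IsClopen {z | z ∈ s i ↔ y ∈ s i} := by
    by_cases hy : y ∈ s i
    · simpa only [hy, iff_true, ofPred_mem_eq] using hs i
    · simp only [hy, iff_false]
      exact (hs i).compl
  obtain ⟨i, hi⟩ := hcover y
  refine ⟨?_, i, fun z hz => (hz i).2 hi⟩
  simpa only [cell, ← ofPred_forall] using isClopen_iInter_of_finite hclopen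

end ClopenPartition

section SmallComponents

variable {Y : Type*} [MetricSpace Y]

lemma exists_isClopen_mem_diam_lt [CompactSpace Y] {y : Y} {r : ℝ}
    (h : diam (connectedComponent y) < r) : ∃ s, IsClopen s ∧ y ∈ s ∧ diam s < r := by
  set δ := (r - diam (connectedComponent y)) / 3 with hδ_def
  have hδ : 0 < δ := by rw [hδ_def]; linarith
  obtain ⟨s, hs, hys, hsU⟩ := exists_isClopen_mem_subset_of_connectedComponent_subset
    isOpen_thickening (self_subset_thickening hδ (connectedComponent y))
  refine ⟨s, hs, hys, ?_⟩
  calc diam s ≤ diam (thickening δ (connectedComponent y)) :=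
        diam_mono hsU (isCompact_univ.isBounded.subset (subset_univ _))
    _ ≤ diam (connectedComponent y) + 2 * δ := diam_thickening_le _ hδ.le
    _ < r := by rw [hδ_def]; linarith

lemma exists_finite_isClopen_partition_diam_lt [CompactSpace Y] {r : ℝ}
    (h : ∀ y : Y, diam (connectedComponent y) < r) :
    ∃ 𝒬 : Set (Set Y), 𝒬.Finite ∧ 𝒬.PairwiseDisjoint id ∧ ⋃₀ 𝒬 = univ ∧
      ∀ Q ∈ 𝒬, IsClopen Q ∧ diam Q < r := by
  choose s hs hys hsr using fun y => exists_isClopen_mem_diam_lt (h y)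
  obtain ⟨t, ht⟩ := isCompact_univ.elim_finite_subcover s (fun y => (hs y).isOpen)
    fun y _ => mem_iUnion.2 ⟨y, hys y⟩
  obtain ⟨𝒬, hfin, hdisj, hcover, hsub⟩ :=
    exists_finite_isClopen_partition_subordinate (s := fun i : t => s i) (fun i => hs i)
      fun y => by simpa using ht (mem_univ y)
  refine ⟨𝒬, hfin, hdisj, hcover, fun Q hQ => ?_⟩
  obtain ⟨hQ, i, hQi⟩ := hsub Q hQ
  exact ⟨hQ, (diam_mono hQi (isCompact_univ.isBounded.subset (subset_univ _))).trans_lt (hsr i)⟩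

end SmallComponents

lemma IsCompact.exists_finite_partition_diam_lt {X : Type*} [MetricSpace X] {V : Set X}
    (hV : IsCompact V) {r : ℝ} (h : ∀ x ∈ V, diam (connectedComponentIn V x) < r) :
    ∃ 𝒬 : Set (Set X), 𝒬.Finite ∧ 𝒬.PairwiseDisjoint id ∧ ⋃₀ 𝒬 = V ∧
      ∀ Q ∈ 𝒬, IsCompact Q ∧ diam Q < r := by
  have : CompactSpace V := isCompact_iff_compactSpace.1 hV
  have hdiam (A : Set V) : diam ((↑) '' A : Set X) = diam A := isometry_subtype_coe.diam_image A
  obtain ⟨𝒬, hfin, hdisj, hcover, hQ⟩ := exists_finite_isClopen_partition_diam_lt (Y := V)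
    (r := r) fun y => by simpa [connectedComponentIn_eq_image y.2, hdiam] using h y y.2
  refine ⟨Set.image (↑) '' 𝒬, hfin.image _, ?_, ?_, ?_⟩
  · rintro _ ⟨Q, hQ, rfl⟩ _ ⟨Q', hQ', rfl⟩ hne
    exact (disjoint_image_iff Subtype.val_injective).2 (hdisj hQ hQ' (ne_of_apply_ne _ hne))
  · rw [← image_sUnion, hcover, image_univ, Subtype.range_coe]
  · rintro _ ⟨Q, hQ𝒬, rfl⟩
    obtain ⟨hQ, hQr⟩ := hQ Q hQ𝒬
    exact ⟨hQ.isClosed.isCompact.image continuous_subtype_val, hdiam Q ▸ hQr⟩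

lemma diamBy_dist_le_diam {X : Type} [PseudoMetricSpace X] {s : Set X}
    (hs : Bornology.IsBounded s) : diamBy dist s ≤ diam s :=
  Real.iSup_le (fun _ => Real.iSup_le (fun hx => Real.iSup_le (fun _ => Real.iSup_le
    (fun hy => dist_le_diam_of_mem hs hx hy) diam_nonneg) diam_nonneg) diam_nonneg) diam_nonneg

lemma meshBy_lt_of_forall_diamBy_lt {X : Type} {ρ : X → X → ℝ} {𝒲 : Set (Set X)} {r : ℝ}
    (h𝒲 : 𝒲.Finite) (hr : 0 < r) (h : ∀ W ∈ 𝒲, diamBy ρ W < r) : meshBy ρ 𝒲 < r := by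
  obtain ⟨r', hr'₀, hr'r, hle⟩ : ∃ r', 0 ≤ r' ∧ r' < r ∧ ∀ W ∈ 𝒲, diamBy ρ W ≤ r' := by
    rcases 𝒲.eq_empty_or_nonempty with rfl | hne
    · exact ⟨0, le_rfl, hr, by simp⟩
    · obtain ⟨W₀, hW₀, hmax⟩ := exists_max_image 𝒲 (diamBy ρ) h𝒲 hne
      exact ⟨max 0 (diamBy ρ W₀), le_max_left .., max_lt hr (h W₀ hW₀),
        fun W hW => (hmax W hW).trans (le_max_right ..)⟩
  exact (Real.iSup_le (fun W => Real.iSup_le (hle W) hr'₀) hr'₀).trans_lt hr'r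

lemma ordCover_le_of_ncard_le {X : Type} {𝒲 𝒱 : Set (Set X)} (h𝒱 : 𝒱.Finite)
    (h : ∀ x, {W | W ∈ 𝒲 ∧ x ∈ W}.ncard ≤ {V | V ∈ 𝒱 ∧ x ∈ V}.ncard) :
    ordCover X 𝒲 ≤ ordCover X 𝒱 := by
  refine ciSup_mono ⟨𝒱.ncard, ?_⟩ fun x => Nat.sub_le_sub_right (h x) 1
  rintro _ ⟨x, rfl⟩
  exact (Nat.sub_le _ _).trans (ncard_le_ncard (fun V hV => hV.1) h𝒱)

lemma ordCover_biUnion_le {X : Type} {𝒱 : Set (Set X)} (h𝒱 : 𝒱.Finite)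
    {𝒬 : Set X → Set (Set X)} (hdisj : ∀ V ∈ 𝒱, (𝒬 V).PairwiseDisjoint id)
    (hsub : ∀ V ∈ 𝒱, ∀ Q ∈ 𝒬 V, Q ⊆ V) : ordCover X (⋃ V ∈ 𝒱, 𝒬 V) ≤ ordCover X 𝒱 := by
  have hmem : ∀ W ∈ ⋃ V ∈ 𝒱, 𝒬 V, ∃ V ∈ 𝒱, W ∈ 𝒬 V := by simp
  choose! parent hparent hmem_parent using hmem
  refine ordCover_le_of_ncard_le h𝒱 fun x => ncard_le_ncard_of_injOn parent ?_ ?_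
    (h𝒱.subset fun V hV => hV.1)
  · rintro W ⟨hW, hxW⟩
    exact ⟨hparent W hW, hsub _ (hparent W hW) W (hmem_parent W hW) hxW⟩
  · rintro W ⟨hW, hxW⟩ W' ⟨hW', hxW'⟩ heq
    by_contra hne
    refine Set.disjoint_left.1 (hdisj _ (hparent W hW) (hmem_parent W hW) ?_ hne) hxW hxW'
    exact heq ▸ hmem_parent W' hW'

/-- If every connected component of every member of a finite closed cover
`𝒱` of a compact metric space has diameter less than `2c`, then there is a finite closed
cover `𝒲` refining `𝒱` with `mesh(𝒲) < 2c` and `ord(𝒲) ≤ ord(𝒱)`. -/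
theorem closed_cover_small_components_refinement
    (X : Type) [MetricSpace X] [CompactSpace X] (c : ℝ) (hc : 0 < c)
    (𝒱 : Set (Set X)) (h𝒱 : IsFinClosedCover X 𝒱)
    (hcomp : ∀ V ∈ 𝒱, ∀ x ∈ V, Metric.diam (connectedComponentIn V x) < 2 * c) :
    ∃ 𝒲 : Set (Set X), IsFinClosedCover X 𝒲 ∧
      meshBy dist 𝒲 < 2 * c ∧
      ordCover X 𝒲 ≤ ordCover X 𝒱 ∧
      ∀ W ∈ 𝒲, ∃ V ∈ 𝒱, W ⊆ V := by
  obtain ⟨h𝒱fin, h𝒱closed, h𝒱cover⟩ := h𝒱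
  choose! 𝒬 h𝒬fin h𝒬disj h𝒬union h𝒬small using fun V hV =>
    (h𝒱closed V hV).isCompact.exists_finite_partition_diam_lt (hcomp V hV)
  have hsub : ∀ V ∈ 𝒱, ∀ Q ∈ 𝒬 V, Q ⊆ V := fun V hV Q hQ =>
    h𝒬union V hV ▸ subset_sUnion_of_mem hQ
  refine ⟨⋃ V ∈ 𝒱, 𝒬 V, ⟨h𝒱fin.biUnion h𝒬fin, ?_, ?_⟩, ?_,
    ordCover_biUnion_le h𝒱fin h𝒬disj hsub, ?_⟩
  · intro W hW
    obtain ⟨V, hV, hW⟩ := mem_iUnion₂.1 hW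
    exact (h𝒬small V hV W hW).1.isClosed
  · simp only [sUnion_iUnion]
    rw [← h𝒱cover, sUnion_eq_biUnion]
    exact iUnion₂_congr h𝒬union
  · refine meshBy_lt_of_forall_diamBy_lt (h𝒱fin.biUnion h𝒬fin) (by positivity) fun W hW => ?_
    obtain ⟨V, hV, hW⟩ := mem_iUnion₂.1 hW
    obtain ⟨hcompact, hdiam⟩ := h𝒬small V hV W hW
    exact (diamBy_dist_le_diam hcompact.isBounded).trans_lt hdiam
  · intro W hW
    obtain ⟨V, hV, hW⟩ := mem_iUnion₂.1 hW
    exact ⟨V, hV, hsub V hV W hW⟩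
end

section
/- Let (X,d) be a compact metric space, ε > 0, and let U be a finite open cover of X with mesh(U,d) < ε. Then Widim_ε(X,d) ≤ D(U). Consequently, if a compact metric space P and a continuous map f: X → P are such that f is U-compatible (there is a finite open cover β of P with f^{-1}(β) refining U), then f is an ε-embedding. -/
open Set Filter Metric MeasureTheory
open scoped ENNReal NNReal

/-!
Refine `𝒰` to a finite open cover `𝒱` of order `n = D(𝒰)` and map `X` to `ℝ^𝒱` by a partition
of unity subordinate to `𝒱`. A fibre of this map lies in one member of `𝒱`, so it has diameter
`< ε`. A point of the image has at most `n + 1` nonzero coordinates and they sum to `1`, so it has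
no coordinate in one of the `n + 1` dense, pairwise disjoint color classes `(c + 1) √2 + ℚ`.
Cutting the coordinate axes at finitely many points of a color class chops the image into small
open boxes, pairwise disjoint for a fixed color. The boxes of all colors cover the image (a point
lies in a box of each color it misses) and a point lies in at most one box of each color, so the
image has covering dimension at most `n`.
-/

namespace Real

lemma le_biSup_of_forall_le {α : Type*} {f : α → ℝ} {s : Set α} {C : ℝ} (hf : ∀ x, f x ≤ C)
    {a : α} (ha : a ∈ s) : f a ≤ ⨆ x ∈ s, f x := by
  refine le_ciSup_of_le ⟨max C 0, ?_⟩ a (ciSup_pos (f := fun _ => f a) ha).ge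
  rintro _ ⟨x, rfl⟩
  exact Real.iSup_le (fun _ => (hf x).trans (le_max_left _ _)) (le_max_right _ _)

lemma biSup_le_of_forall_le {α : Type*} {f : α → ℝ} {s : Set α} {C : ℝ} (hf : ∀ x ∈ s, f x ≤ C)
    (hC : 0 ≤ C) : ⨆ x ∈ s, f x ≤ C :=
  Real.iSup_le (fun x => Real.iSup_le (hf x) hC) hC

end Real

lemma dist_le_meshBy {X : Type} [PseudoMetricSpace X] [BoundedSpace X] {𝒰 : Set (Set X)}
    {U : Set X} (hU : U ∈ 𝒰) {x y : X} (hx : x ∈ U) (hy : y ∈ U) :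
    dist x y ≤ meshBy dist 𝒰 := by
  have hC : ∀ a b : X, dist a b ≤ diam (univ : Set X) := fun a b =>
    dist_le_diam_of_mem (Bornology.isBounded_univ.2 ‹_›) (mem_univ a) (mem_univ b)
  have hrow : ∀ (s : Set X) a, ⨆ b ∈ s, dist a b ≤ diam (univ : Set X) := fun s a =>
    Real.biSup_le_of_forall_le (fun b _ => hC a b) diam_nonneg
  have hdiam : ∀ s : Set X, diamBy dist s ≤ diam (univ : Set X) := fun s =>
    Real.biSup_le_of_forall_le (fun a _ => hrow s a) diam_nonneg
  calc dist x y ≤ ⨆ b ∈ U, dist x b := Real.le_biSup_of_forall_le (hC x) hy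
    _ ≤ diamBy dist U := Real.le_biSup_of_forall_le (hrow U) hx
    _ ≤ meshBy dist 𝒰 := Real.le_biSup_of_forall_le hdiam hU

section Covers

open scoped Finset

variable {X : Type}

lemma ncard_le_ordCover_add_one {𝒱 : Set (Set X)} (h𝒱 : 𝒱.Finite) (x : X) :
    {V | V ∈ 𝒱 ∧ x ∈ V}.ncard ≤ ordCover X 𝒱 + 1 := by
  have : {V | V ∈ 𝒱 ∧ x ∈ V}.ncard - 1 ≤ ordCover X 𝒱 := by
    refine le_ciSup (f := fun z => {V | V ∈ 𝒱 ∧ z ∈ V}.ncard - 1) ⟨𝒱.ncard, ?_⟩ x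
    rintro _ ⟨z, rfl⟩
    exact (Nat.sub_le _ _).trans (ncard_le_ncard (fun V hV => hV.1) h𝒱)
  omega

open scoped Classical in
lemma card_filter_mem_le_ordCover_add_one {𝒱 : Set (Set X)} [Fintype 𝒱] (x : X) :
    #{V : 𝒱 | x ∈ (V : Set X)} ≤ ordCover X 𝒱 + 1 := by
  have himage : Subtype.val '' {V : 𝒱 | x ∈ (V : Set X)} = {V | V ∈ 𝒱 ∧ x ∈ V} := by
    ext V; simp [and_comm]
  rw [← Set.toFinset_ofPred, ← ncard_eq_toFinset_card',
    ← ncard_image_of_injective _ Subtype.val_injective, himage]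
  exact ncard_le_ordCover_add_one (toFinite 𝒱) x

lemma ordCover_le_of_forall_ncard_le {𝒱 : Set (Set X)} {n : ℕ}
    (h : ∀ x, {V | V ∈ 𝒱 ∧ x ∈ V}.ncard ≤ n + 1) : ordCover X 𝒱 ≤ n :=
  ciSup_le' fun x => by have := h x; omega

variable [TopologicalSpace X]

lemma degCover_le_ordCover {𝒰 𝒱 : Set (Set X)} (h𝒱 : IsFinOpenCover X 𝒱)
    (href : ∀ V ∈ 𝒱, ∃ U ∈ 𝒰, V ⊆ U) : degCover X 𝒰 ≤ ordCover X 𝒱 := by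
  unfold degCover
  exact Nat.sInf_le ⟨𝒱, h𝒱, href, rfl⟩

lemma exists_refinement_ordCover_eq_degCover {𝒰 : Set (Set X)} (h𝒰 : IsFinOpenCover X 𝒰) :
    ∃ 𝒱, IsFinOpenCover X 𝒱 ∧ (∀ V ∈ 𝒱, ∃ U ∈ 𝒰, V ⊆ U) ∧ ordCover X 𝒱 = degCover X 𝒰 :=
  Nat.sInf_mem (s := {m | ∃ 𝒱, IsFinOpenCover X 𝒱 ∧ (∀ V ∈ 𝒱, ∃ U ∈ 𝒰, V ⊆ U) ∧ ordCover X 𝒱 = m})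
    ⟨_, 𝒰, h𝒰, fun V hV => ⟨V, hV, subset_rfl⟩, rfl⟩

lemma covDim_le_iff {n : ℕ} :
    covDim X ≤ n ↔ ∀ 𝒲, IsFinOpenCover X 𝒲 → degCover X 𝒲 ≤ n := by
  simp only [covDim, iSup₂_le_iff, Nat.cast_le]

lemma widim_le_covDim {ρ : X → X → ℝ} {ε : ℝ} {K : Type} [MetricSpace K] [CompactSpace K]
    {f : X → K} (hf : Continuous f) (hfε : ∀ x y, f x = f y → ρ x y < ε) :
    widim X ρ ε ≤ covDim K := by
  unfold widim
  exact sInf_le ⟨K, inferInstance, inferInstance, f, hf, hfε, rfl⟩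

lemma IsFinOpenCover.exists_continuous_sum_eq_one [NormalSpace X] [ParacompactSpace X]
    {𝒱 : Set (Set X)} [Fintype 𝒱] (h𝒱 : IsFinOpenCover X 𝒱) :
    ∃ F : X → 𝒱 → ℝ, Continuous F ∧ (∀ x, ∑ V, F x V = 1) ∧
      ∀ x V, F x V ≠ 0 → x ∈ (V : Set X) := by
  obtain ⟨ρ, hρ⟩ := PartitionOfUnity.exists_isSubordinate isClosed_univ (fun V : 𝒱 => (V : Set X))
    (fun V => h𝒱.2.1 V V.2) (by rw [← sUnion_eq_iUnion, h𝒱.2.2])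
  refine ⟨fun x V => ρ V x, continuous_pi fun V => (ρ V).continuous, fun x => ?_,
    fun x V hx => hρ V (subset_tsupport _ hx)⟩
  rw [← finsum_eq_sum_of_fintype, ρ.sum_eq_one (mem_univ x)]

end Covers

section SignCell

variable {ι : Type*} (A : Finset ℝ)

def signCell (π : ι → A → Bool) : Set (ι → ℝ) :=
  {y | ∀ i (a : A), if π i a then y i < a else (a : ℝ) < y i}

noncomputable def signPattern (y : ι → ℝ) : ι → A → Bool := fun i a => decide (y i < a)

variable {A}

lemma isOpen_signCell [Finite ι] (π : ι → A → Bool) : IsOpen (signCell A π) := by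
  simp only [signCell, ofPred_forall]
  refine isOpen_iInter_of_finite fun i => isOpen_iInter_of_finite fun a => ?_
  split_ifs
  · exact isOpen_lt (continuous_apply i) continuous_const
  · exact isOpen_lt continuous_const (continuous_apply i)

lemma mem_signCell_signPattern {y : ι → ℝ} (hy : ∀ i, y i ∉ A) :
    y ∈ signCell A (signPattern A y) := by
  intro i a
  by_cases h : y i < a
  · simp [signPattern, h]
  · simpa [signPattern, h] using lt_of_le_of_ne (not_lt.1 h) fun e => hy i (e ▸ a.2)

lemma eq_signPattern_of_mem_signCell {π : ι → A → Bool} {y : ι → ℝ} (hy : y ∈ signCell A π) :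
    π = signPattern A y := by
  funext i a
  have := hy i a
  cases h : π i a <;> simp only [h, if_true, if_false, Bool.false_eq_true] at this <;>
    simp [signPattern, this, this.le]

lemma lt_add_of_mem_signCell {π : ι → A → Bool} {y z : ι → ℝ} (hy : y ∈ signCell A π)
    (hz : z ∈ signCell A π) {i : ι} {δ : ℝ} (hA : ∃ a ∈ A, y i < a ∧ a < y i + δ) :
    z i < y i + δ := by
  obtain ⟨a, ha, hya, hay⟩ := hA
  have hπ : π i ⟨a, ha⟩ = true := by simp [eq_signPattern_of_mem_signCell hy, signPattern, hya]
  have := hz i ⟨a, ha⟩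
  rw [hπ, if_pos rfl] at this
  exact this.trans hay

lemma dist_lt_of_mem_signCell [Fintype ι] {π : ι → A → Bool} {y z : ι → ℝ} {T : Set ℝ} {δ : ℝ}
    (hδ : 0 < δ) (hA : ∀ x ∈ T, ∃ a ∈ A, x < a ∧ a < x + δ) (hy : y ∈ signCell A π)
    (hz : z ∈ signCell A π) (hyT : ∀ i, y i ∈ T) (hzT : ∀ i, z i ∈ T) : dist y z < δ := by
  refine (dist_pi_lt_iff hδ).2 fun i => ?_
  rw [Real.dist_eq, abs_sub_lt_iff]
  constructor <;> linarith [lt_add_of_mem_signCell hy hz (hA _ (hyT i)),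
    lt_add_of_mem_signCell hz hy (hA _ (hzT i))]

end SignCell

lemma IsCompact.exists_finset_subset_forall_exists_btwn {T S : Set ℝ} (hT : IsCompact T)
    (hS : Dense S) {δ : ℝ} (hδ : 0 < δ) :
    ∃ A : Finset ℝ, ↑A ⊆ S ∧ ∀ x ∈ T, ∃ a ∈ A, x < a ∧ a < x + δ := by
  obtain ⟨B, hBS, hB, hTB⟩ := hT.elim_finite_subcover_image (b := S) (c := fun a => Ioo (a - δ) a)
    (fun _ _ => isOpen_Ioo) fun x _ => by
      obtain ⟨a, haS, hxa, hax⟩ := hS.exists_between (lt_add_of_pos_right x hδ)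
      exact mem_biUnion haS ⟨by linarith, hxa⟩
  refine ⟨hB.toFinset, by simpa using hBS, fun x hx => ?_⟩
  obtain ⟨a, haB, hax, hxa⟩ := mem_iUnion₂.1 (hTB hx)
  exact ⟨a, hB.mem_toFinset.2 haB, hxa, by linarith⟩

theorem covDim_le_of_forall_exists_forall_notMem {ι : Type} [Fintype ι] {n : ℕ}
    {K : Set (ι → ℝ)} (hK : IsCompact K) (S : Fin (n + 1) → Set ℝ) (hS : ∀ c, Dense (S c))
    (hKS : ∀ p ∈ K, ∃ c, ∀ i, p i ∉ S c) : covDim K ≤ n := by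
  refine covDim_le_iff.2 fun 𝒲 h𝒲 => ?_
  have : CompactSpace K := isCompact_iff_compactSpace.1 hK
  obtain ⟨δ, hδ, hleb⟩ := lebesgue_number_lemma_of_metric_sUnion isCompact_univ h𝒲.2.1
    h𝒲.2.2.symm.subset
  have hT : IsCompact (⋃ i, (fun p : ι → ℝ => p i) '' K) :=
    isCompact_iUnion fun i => hK.image (continuous_apply i)
  choose A hAS hA using fun c => hT.exists_finset_subset_forall_exists_btwn (hS c) hδ
  have hKT : ∀ (z : K) i, (z : ι → ℝ) i ∈ ⋃ i, (fun p : ι → ℝ => p i) '' K :=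
    fun z i => mem_iUnion.2 ⟨i, z, z.2, rfl⟩
  let cell : (Σ c, ι → A c → Bool) → Set K := fun σ => Subtype.val ⁻¹' signCell (A σ.1) σ.2
  let ownCell : Fin (n + 1) → K → Set K := fun c y => cell ⟨c, signPattern (A c) y⟩
  have mem_ownCell : ∀ (y : K) c σ, y ∈ cell ⟨c, σ⟩ → cell ⟨c, σ⟩ = ownCell c y :=
    fun y c σ hy => congrArg (fun π => cell ⟨c, π⟩) (eq_signPattern_of_mem_signCell hy)
  -- empty boxes are dropped, since `𝒲` is empty when `K` is
  let 𝒱 : Set (Set K) := {V | V ∈ range cell ∧ V.Nonempty}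
  have h𝒱 : IsFinOpenCover K 𝒱 := by
    refine ⟨(finite_range cell).subset fun V hV => hV.1, ?_, ?_⟩
    · rintro _ ⟨⟨σ, rfl⟩, -⟩
      exact (isOpen_signCell σ.2).preimage continuous_subtype_val
    · refine eq_univ_of_forall fun y => ?_
      obtain ⟨c, hc⟩ := hKS y y.2
      have hy : y ∈ ownCell c y := mem_signCell_signPattern fun i h => hc i (hAS c h)
      exact ⟨_, ⟨mem_range_self _, y, hy⟩, hy⟩
  have hrefine : ∀ V ∈ 𝒱, ∃ W ∈ 𝒲, V ⊆ W := by
    rintro _ ⟨⟨⟨c, π⟩, rfl⟩, z, hz⟩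
    obtain ⟨W, hW, hzW⟩ := hleb z (mem_univ z)
    exact ⟨W, hW, fun y hy => hzW <| dist_lt_of_mem_signCell hδ (hA c) hy hz (hKT y) (hKT z)⟩
  refine (degCover_le_ordCover h𝒱 hrefine).trans (ordCover_le_of_forall_ncard_le fun y => ?_)
  calc {V | V ∈ 𝒱 ∧ y ∈ V}.ncard ≤ (range fun c => ownCell c y).ncard := by
        refine ncard_le_ncard ?_ (finite_range _)
        rintro _ ⟨⟨⟨⟨c, σ⟩, rfl⟩, -⟩, hy⟩
        exact ⟨c, (mem_ownCell y c σ hy).symm⟩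
    _ ≤ n + 1 := by
        rw [← image_univ]
        exact (ncard_image_le (toFinite _)).trans (by simp)

section Palette

open scoped Finset

variable {θ : ℝ}

lemma Irrational.natCast_mul_add_ratCast (hθ : Irrational θ) {m : ℕ} (hm : m ≠ 0) (q : ℚ) :
    Irrational (m * θ + q) :=
  (hθ.natCast_mul hm).add_ratCast q

lemma dense_range_add_ratCast (a : ℝ) : Dense (range fun q : ℚ => a + q) :=
  (add_left_surjective a).denseRange.comp Rat.denseRange_cast (continuous_const_add a)

lemma Irrational.natCast_eq_of_mul_add_ratCast_eq (hθ : Irrational θ) {m m' : ℕ} {q q' : ℚ}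
    (h : m * θ + q = m' * θ + q') : m = m' := by
  by_contra hne
  have hne' : ((m : ℤ) - m' : ℤ) ≠ 0 := sub_ne_zero.2 (by exact_mod_cast hne)
  refine ((hθ.intCast_mul hne').add_ratCast (q - q')).ne_zero ?_
  push_cast
  linarith

theorem exists_forall_notMem_color {ι : Type*} [Fintype ι] (hθ : Irrational θ) {n : ℕ}
    {p : ι → ℝ} (hsum : ∑ i, p i = 1) (hcard : #{i | p i ≠ 0} ≤ n + 1) :
    ∃ c : Fin (n + 1), ∀ i, p i ∉ range fun q : ℚ => ((c + 1 : ℕ) : ℝ) * θ + q := by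
  classical
  by_contra! h
  choose g q hq using h
  have hg : ∀ c, p (g c) ≠ 0 := fun c =>
    hq c ▸ (hθ.natCast_mul_add_ratCast (Nat.succ_ne_zero c) (q c)).ne_zero
  have hinj : Function.Injective g := fun c c' hcc' =>
    Fin.ext <| Nat.succ_injective <|
      hθ.natCast_eq_of_mul_add_ratCast_eq ((hq c).trans (hcc' ▸ (hq c').symm))
  have himage : Finset.univ.image g = ({i | p i ≠ 0} : Finset ι) := by
    refine Finset.eq_of_subset_of_card_le (fun i hi => ?_) ?_
    · obtain ⟨c, -, rfl⟩ := Finset.mem_image.1 hi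
      simpa using hg c
    · rwa [Finset.card_image_of_injective _ hinj, Finset.card_univ, Fintype.card_fin]
  have hm : ∑ c : Fin (n + 1), ((c : ℕ) + 1) ≠ 0 :=
    (Finset.sum_pos (fun _ _ => Nat.succ_pos _) Finset.univ_nonempty).ne'
  refine (hθ.natCast_mul_add_ratCast hm (∑ c, q c)).ne_one ?_
  rw [← hsum, ← Finset.sum_filter_ne_zero (f := p), ← himage,
    Finset.sum_image fun c _ c' _ h => hinj h, Nat.cast_sum, Finset.sum_mul, Rat.cast_sum, ← Finset.sum_add_distrib]
  exact Finset.sum_congr rfl fun c _ => hq c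

end Palette

open scoped Finset in
theorem covDim_range_le {X : Type} [TopologicalSpace X] [CompactSpace X] {ι : Type} [Fintype ι]
    {n : ℕ} {F : X → ι → ℝ} (hF : Continuous F) (hsum : ∀ x, ∑ i, F x i = 1)
    (hcard : ∀ x, #{i | F x i ≠ 0} ≤ n + 1) : covDim (range F) ≤ n :=
  covDim_le_of_forall_exists_forall_notMem (isCompact_range hF) _
    (fun c => dense_range_add_ratCast _) (by
      rintro _ ⟨x, rfl⟩
      exact exists_forall_notMem_color irrational_sqrt_two (hsum x) (hcard x))

theorem widim_le_degCover_of_mesh_lt_general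
    (X : Type) [MetricSpace X] [CompactSpace X] (ε : ℝ)
    (𝒰 : Set (Set X)) (h𝒰 : IsFinOpenCover X 𝒰) (hmesh : meshBy dist 𝒰 < ε) :
    widim X dist ε ≤ (degCover X 𝒰 : ℕ∞) ∧
    ∀ (P : Type) (_ : MetricSpace P) (_ : CompactSpace P) (f : X → P), Continuous f →
      (∃ β : Set (Set P), IsFinOpenCover P β ∧ ∀ B ∈ β, ∃ U ∈ 𝒰, f ⁻¹' B ⊆ U) →
      ∀ x y : X, f x = f y → dist x y < ε := by
  have hsmall : ∀ U ∈ 𝒰, ∀ x ∈ U, ∀ y ∈ U, dist x y < ε := fun U hU x hx y hy =>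
    (dist_le_meshBy hU hx hy).trans_lt hmesh
  refine ⟨?_, ?_⟩
  · obtain ⟨𝒱, h𝒱, href, hord⟩ := exists_refinement_ordCover_eq_degCover h𝒰
    have := h𝒱.1.fintype
    obtain ⟨F, hF, hsum, hsupp⟩ := h𝒱.exists_continuous_sum_eq_one
    have : CompactSpace (range F) := isCompact_iff_compactSpace.1 (isCompact_range hF)
    have hF𝒰 : ∀ x y, F x = F y → dist x y < ε := fun x y hxy => by
      obtain ⟨V, -, hV⟩ := Finset.exists_ne_zero_of_sum_ne_zero ((hsum x).trans_ne one_ne_zero)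
      obtain ⟨U, hU, hVU⟩ := href V V.2
      exact hsmall U hU x (hVU (hsupp x V hV)) y (hVU (hsupp y V (hxy ▸ hV)))
    calc widim X dist ε ≤ covDim (range F) :=
          widim_le_covDim hF.rangeFactorization fun x y hxy => hF𝒰 x y (congrArg Subtype.val hxy)
      _ ≤ degCover X 𝒰 := covDim_range_le hF hsum fun x => hord ▸
          (Finset.card_le_card fun V => by simpa using hsupp x V).trans
            (card_filter_mem_le_ordCover_add_one x)
  · rintro P _ _ f - ⟨β, hβ, hβ𝒰⟩ x y hxy
    obtain ⟨B, hB, hxB⟩ := mem_sUnion.1 (hβ.2.2.symm ▸ mem_univ (f x))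
    obtain ⟨U, hU, hBU⟩ := hβ𝒰 B hB
    exact hsmall U hU x (hBU hxB) y (hBU (show f y ∈ B from hxy ▸ hxB))

/-- If `𝒰` is a finite open cover of mesh `< ε`, then
`Widim_ε(X,d) ≤ D(𝒰)`; consequently, any continuous `𝒰`-compatible map to a compact
metric space is an `ε`-embedding. -/
theorem widim_le_degCover_of_mesh_lt
    (X : Type) [MetricSpace X] [CompactSpace X] (ε : ℝ) (hε : 0 < ε)
    (𝒰 : Set (Set X)) (h𝒰 : IsFinOpenCover X 𝒰) (hmesh : meshBy dist 𝒰 < ε) :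
    widim X dist ε ≤ (degCover X 𝒰 : ℕ∞) ∧
    ∀ (P : Type) (_ : MetricSpace P) (_ : CompactSpace P) (f : X → P), Continuous f →
      (∃ β : Set (Set P), IsFinOpenCover P β ∧ ∀ B ∈ β, ∃ U ∈ 𝒰, f ⁻¹' B ⊆ U) →
      ∀ x y : X, f x = f y → dist x y < ε :=
  widim_le_degCover_of_mesh_lt_general X ε 𝒰 h𝒰 hmesh
end

section
/- Let (X,d) be a compact metric space and let U be a finite open cover of X with Lebesgue number λ > 0 (i.e., every subset of X of diameter less than λ is contained in some member of U). Then D(U) ≤ Widim_λ(X,d). -/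
open Set Filter Metric MeasureTheory
open scoped ENNReal NNReal

/-!
Let `f : X → K` be a continuous `λ`-embedding into a compact metric space. Each fiber of `f` is
compact of diameter `< λ`, so it lies in some `U ∈ 𝒰`. Since `f` is a closed map, the sets
`{k | f⁻¹{k} ⊆ U}` for `U ∈ 𝒰` form a finite open cover `𝒲` of `K` whose pullback refines `𝒰`.
Pulling back any refinement of `𝒲` does not increase the order, so `D(𝒰) ≤ D(𝒲) ≤ dim K`.
-/

lemma diam_lt_of_isCompact {α : Type*} [PseudoMetricSpace α] {s : Set α} (hs : IsCompact s)
    {r : ℝ} (hr : 0 < r) (h : ∀ x ∈ s, ∀ y ∈ s, dist x y < r) : diam s < r := by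
  rcases s.eq_empty_or_nonempty with rfl | hne
  · simpa using hr
  obtain ⟨p, ⟨hp₁, hp₂⟩, hmax⟩ :=
    (hs.prod hs).exists_isMaxOn (hne.prod hne) continuous_dist.continuousOn
  exact (diam_le_of_forall_dist_le dist_nonneg fun x hx y hy => hmax (mk_mem_prod hx hy)).trans_lt
    (h _ hp₁ _ hp₂)

lemma ordCover_preimage_le {X K : Type} (f : X → K) {𝒱 : Set (Set K)} (h𝒱 : 𝒱.Finite) :
    ordCover X ((f ⁻¹' ·) '' 𝒱) ≤ ordCover K 𝒱 := by
  have hbdd : BddAbove (range fun y : K => {V | V ∈ 𝒱 ∧ y ∈ V}.ncard - 1) := by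
    refine ⟨𝒱.ncard, ?_⟩
    rintro _ ⟨y, rfl⟩
    exact (Nat.sub_le _ _).trans (ncard_le_ncard (fun V hV => hV.1) h𝒱)
  refine ciSup_le' fun x => (Nat.sub_le_sub_right ?_ 1).trans (le_ciSup hbdd (f x))
  have hsub : {S | S ∈ (f ⁻¹' ·) '' 𝒱 ∧ x ∈ S} ⊆ (f ⁻¹' ·) '' {V | V ∈ 𝒱 ∧ f x ∈ V} := by
    rintro _ ⟨⟨V, hV, rfl⟩, hxV⟩
    exact ⟨V, ⟨hV, hxV⟩, rfl⟩
  have hfin : {V | V ∈ 𝒱 ∧ f x ∈ V}.Finite := h𝒱.subset fun V hV => hV.1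
  exact (ncard_le_ncard hsub (hfin.image _)).trans (ncard_image_le hfin)

section

variable {X K : Type} [TopologicalSpace X] [TopologicalSpace K]

lemma IsFinOpenCover.preimage {f : X → K} (hf : Continuous f) {𝒱 : Set (Set K)}
    (h𝒱 : IsFinOpenCover K 𝒱) : IsFinOpenCover X ((f ⁻¹' ·) '' 𝒱) := by
  obtain ⟨hfin, hopen, hcover⟩ := h𝒱
  refine ⟨hfin.image _, ?_, ?_⟩
  · rintro _ ⟨V, hV, rfl⟩
    exact (hopen V hV).preimage hf
  · rw [sUnion_image, ← preimage_iUnion₂, ← sUnion_eq_biUnion, hcover, preimage_univ]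

lemma IsFinOpenCover.kernImage_image {f : X → K} (hf : IsClosedMap f) {𝒰 : Set (Set X)}
    (h𝒰 : IsFinOpenCover X 𝒰) (hfib : ∀ k, ∃ U ∈ 𝒰, f ⁻¹' {k} ⊆ U) :
    IsFinOpenCover K (kernImage f '' 𝒰) := by
  obtain ⟨hfin, hopen, -⟩ := h𝒰
  refine ⟨hfin.image _, ?_, eq_univ_of_forall fun k => ?_⟩
  · rintro _ ⟨U, hU, rfl⟩
    exact isClosedMap_iff_kernImage.mp hf (hopen U hU)
  · obtain ⟨U, hU, hkU⟩ := hfib k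
    exact ⟨kernImage f U, mem_image_of_mem _ hU, fun x hx => hkU hx⟩

lemma degCover_le_degCover_of_preimage_subset {f : X → K} (hf : Continuous f)
    {𝒰 : Set (Set X)} {𝒲 : Set (Set K)} (h𝒲 : IsFinOpenCover K 𝒲)
    (hsub : ∀ W ∈ 𝒲, ∃ U ∈ 𝒰, f ⁻¹' W ⊆ U) : degCover X 𝒰 ≤ degCover K 𝒲 := by
  obtain ⟨𝒱, h𝒱, h𝒱𝒲, h𝒱ord⟩ : degCover K 𝒲 ∈ {m | ∃ 𝒱 : Set (Set K),
      IsFinOpenCover K 𝒱 ∧ (∀ V ∈ 𝒱, ∃ W ∈ 𝒲, V ⊆ W) ∧ ordCover K 𝒱 = m} :=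
    Nat.sInf_mem ⟨_, 𝒲, h𝒲, fun W hW => ⟨W, hW, subset_rfl⟩, rfl⟩
  have h𝒱𝒰 : ∀ P ∈ (f ⁻¹' ·) '' 𝒱, ∃ U ∈ 𝒰, P ⊆ U := by
    rintro _ ⟨V, hV, rfl⟩
    obtain ⟨W, hW, hVW⟩ := h𝒱𝒲 V hV
    obtain ⟨U, hU, hWU⟩ := hsub W hW
    exact ⟨U, hU, (preimage_mono hVW).trans hWU⟩
  calc degCover X 𝒰 ≤ ordCover X ((f ⁻¹' ·) '' 𝒱) := Nat.sInf_le ⟨_, h𝒱.preimage hf, h𝒱𝒰, rfl⟩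
    _ ≤ ordCover K 𝒱 := ordCover_preimage_le f h𝒱.1
    _ = degCover K 𝒲 := h𝒱ord

lemma degCover_le_covDim {𝒲 : Set (Set K)} (h𝒲 : IsFinOpenCover K 𝒲) :
    (degCover K 𝒲 : ℕ∞) ≤ covDim K :=
  le_iSup₂ (f := fun 𝒲 (_ : IsFinOpenCover K 𝒲) => (degCover K 𝒲 : ℕ∞)) 𝒲 h𝒲

lemma degCover_le_covDim_of_fiber_subset {f : X → K} (hf : Continuous f) (hf' : IsClosedMap f)
    {𝒰 : Set (Set X)} (h𝒰 : IsFinOpenCover X 𝒰) (hfib : ∀ k, ∃ U ∈ 𝒰, f ⁻¹' {k} ⊆ U) :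
    (degCover X 𝒰 : ℕ∞) ≤ covDim K := by
  have h𝒲 := h𝒰.kernImage_image hf' hfib
  have hsub : ∀ W ∈ kernImage f '' 𝒰, ∃ U ∈ 𝒰, f ⁻¹' W ⊆ U := by
    rintro _ ⟨U, hU, rfl⟩
    exact ⟨U, hU, subset_kernImage_iff.mp subset_rfl⟩
  exact (Nat.cast_le.mpr (degCover_le_degCover_of_preimage_subset hf h𝒲 hsub)).trans
    (degCover_le_covDim h𝒲)

end

/-- If `λ > 0` is a Lebesgue number of a finite open cover `𝒰` of a
compact metric space `X`, then `D(𝒰) ≤ Widim_λ(X,d)`. -/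
theorem degCover_le_widim_of_lebesgue_number
    (X : Type) [MetricSpace X] [CompactSpace X]
    (𝒰 : Set (Set X)) (h𝒰 : IsFinOpenCover X 𝒰) (lam : ℝ) (hlam : 0 < lam)
    (hleb : ∀ s : Set X, Metric.diam s < lam → ∃ U ∈ 𝒰, s ⊆ U) :
    (degCover X 𝒰 : ℕ∞) ≤ widim X dist lam := by
  refine le_sInf ?_
  rintro _ ⟨K, _, _, f, hf, hfib, rfl⟩
  refine degCover_le_covDim_of_fiber_subset hf hf.isClosedMap h𝒰 fun k => hleb _ ?_
  exact diam_lt_of_isCompact (isClosed_singleton.preimage hf).isCompact hlam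
    fun x hx y hy => hfib x y (hx.trans hy.symm)
end
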